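/- Let ᾱ < γ̄ < β̄ < δ̄ < ᾱ + π be real numbers. Then the cross-ratio r = (sin(β̄−ᾱ)·sin(δ̄−γ̄)) / (sin(β̄−γ̄)·sin(δ̄−ᾱ)) is well defined (the denominator is nonzero) and satisfies r > 1. -/
import Mathlib


theorem cross_ratio_gt_one (a g b d : ℝ)
    (h1 : a < g) (h2 : g < b) (h3 : b < d) (h4 : d < a + Real.pi) :
    Real.sin (b - g) * Real.sin (d - a) ≠ 0 ∧
    1 < (Real.sin (b - a) * Real.sin (d - g)) / (Real.sin (b - g) * Real.sin (d - a)) := by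
  have hda : Real.sin (d - a) > 0 :=
    Real.sin_pos_of_pos_of_lt_pi (by linarith) (by linarith)
  have hbg : Real.sin (b - g) > 0 :=
    Real.sin_pos_of_pos_of_lt_pi (by linarith) (by linarith)
  have hdb : Real.sin (d - b) > 0 :=
    Real.sin_pos_of_pos_of_lt_pi (by linarith) (by linarith)
  have hga : Real.sin (g - a) > 0 :=
    Real.sin_pos_of_pos_of_lt_pi (by linarith) (by linarith)
  have hD : Real.sin (b - g) * Real.sin (d - a) > 0 := mul_pos hbg hda
  have key : Real.sin (b - a) * Real.sin (d - g)
      = Real.sin (b - g) * Real.sin (d - a) + Real.sin (d - b) * Real.sin (g - a) := by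
    simp only [Real.sin_sub]
    ring
  refine ⟨ne_of_gt hD, (one_lt_div hD).mpr ?_⟩
  nlinarith [mul_pos hdb hga]
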